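/- arXiv:math/0012269 — 3 statements merged into one kernel-verified Lean document; each statement's English description precedes it below -/
import Mathlib

section
/- Let K = ℚ(√d) be an imaginary quadratic field, where d < 0 is a squarefree integer, with ring of integers O_K, and let f ≥ 1 be an integer. Then Nat.card((O_K/fO_K)ˣ) ≥ φ(f)², where φ denotes Euler's totient function. -/
open IntermediateField NumberField

/-- The imaginary quadratic field `ℚ(√d)` realised inside `ℂ`
(for `d < 0`, the element `i·√(-d)` is a square root of `d`). -/
noncomputable def imagQuadField (d : ℤ) : IntermediateField ℚ ℂ :=
  ℚ⟮(Complex.I * Real.sqrt (-(d : ℝ)) : ℂ)⟯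

/-!
By the Chinese remainder theorem `n ↦ #(𝓞 K ⧸ n)ˣ` is multiplicative, so it suffices to treat
`n = p ^ k`. The reduction `𝓞 K ⧸ p ^ k → 𝓞 K ⧸ p` has nilpotent kernel, so a class is a unit
exactly when its image is, and every fibre has the same size; hence
`#(𝓞 K ⧸ p ^ k)ˣ = p ^ (2k - 2) · #(𝓞 K ⧸ p)ˣ`. Finally `𝓞 K ⧸ p` is a ring of order `p²`: its
nonunits lie in at most two maximal ideals, each of order at most `p`, so it has at least
`p² - (2p - 1) = (p - 1)²` units.
-/

theorem AddMonoidHom.card_preimage_of_surjective {G H : Type*} [AddGroup G] [AddGroup H]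
    (f : G →+ H) (hf : Function.Surjective f) (S : Set H) :
    Nat.card (f ⁻¹' S) = Nat.card S * Nat.card f.ker := by
  let e := QuotientAddGroup.quotientKerEquivOfSurjective f hf
  have hpre : f ⁻¹' S = QuotientAddGroup.mk ⁻¹' (e ⁻¹' S) := rfl
  rw [hpre, Nat.card_congr (QuotientAddGroup.preimageMkEquivAddSubgroupProdSet _ _),
    Nat.card_prod, Nat.card_preimage_of_injective e.injective (by simp [e.surjective.range_eq]),
    mul_comm]

theorem Nat.card_units_eq_card_setOf_isUnit (M : Type*) [Monoid M] :
    Nat.card Mˣ = Nat.card {a : M | IsUnit a} :=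
  (Nat.card_range_of_injective Units.val_injective).symm

theorem RingHom.isUnit_of_isUnit_map_of_ker_isNilpotent {A B : Type*} [CommRing A] [Ring B]
    (f : A →+* B) (hf : Function.Surjective f) (hker : ∀ a ∈ RingHom.ker f, IsNilpotent a)
    {a : A} (ha : IsUnit (f a)) : IsUnit a := by
  obtain ⟨b, hb⟩ := hf ↑ha.unit⁻¹
  have hab : a * b - 1 ∈ RingHom.ker f := by simp [RingHom.mem_ker, hb]
  have hunit : IsUnit (a * b) := by simpa using (hker _ hab).isUnit_add_one
  exact isUnit_of_mul_isUnit_left hunit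

theorem RingHom.card_units_mul_card_eq_of_ker_isNilpotent {A B : Type*} [CommRing A] [Ring B]
    (f : A →+* B) (hf : Function.Surjective f) (hker : ∀ a ∈ RingHom.ker f, IsNilpotent a) :
    Nat.card Aˣ * Nat.card B = Nat.card Bˣ * Nat.card A := by
  have hunits : {a : A | IsUnit a} = f.toAddMonoidHom ⁻¹' {b | IsUnit b} :=
    Set.ext fun a => ⟨fun h => h.map f, f.isUnit_of_isUnit_map_of_ker_isNilpotent hf hker⟩
  have hA := f.toAddMonoidHom.card_preimage_of_surjective (by exact hf) Set.univ
  rw [Set.preimage_univ, Nat.card_univ, Nat.card_univ] at hA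
  rw [Nat.card_units_eq_card_setOf_isUnit, Nat.card_units_eq_card_setOf_isUnit, hunits,
    AddMonoidHom.card_preimage_of_surjective _ (by exact hf), hA]
  ring

theorem Ideal.card_units_quotient_mul_of_isCoprime {R : Type*} [CommRing R] {I J : Ideal R}
    (h : IsCoprime I J) :
    Nat.card (R ⧸ I * J)ˣ = Nat.card (R ⧸ I)ˣ * Nat.card (R ⧸ J)ˣ := by
  rw [← Nat.card_prod, ← Nat.card_congr MulEquiv.prodUnits.toEquiv,
    Nat.card_congr (Units.mapEquiv (quotientMulEquivQuotientProd I J h).toMulEquiv).toEquiv]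

section CardPrimeSq

variable {A : Type*} [CommRing A] {p : ℕ}

theorem Ideal.card_le_of_card_eq_prime_sq (hp : p.Prime) (hA : Nat.card A = p ^ 2)
    {I : Ideal A} (hI : I ≠ ⊤) : Nat.card I ≤ p := by
  have : Finite A := Nat.finite_of_card_ne_zero (hA ▸ pow_ne_zero 2 hp.ne_zero)
  have : Nontrivial (A ⧸ I) := Ideal.Quotient.nontrivial_iff.mpr hI
  have : Finite (A ⧸ I) := Finite.of_surjective _ Ideal.Quotient.mk_surjective
  have hlagrange := I.card_eq_card_quotient_mul_card
  have hquot : 1 < Nat.card (A ⧸ I) := Finite.one_lt_card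
  obtain ⟨j, hj, hcard⟩ := (Nat.dvd_prime_pow hp).mp (hA ▸ Dvd.intro _ hlagrange.symm)
  have hj2 : j ≠ 2 := by
    rintro rfl
    rw [hA, hcard] at hlagrange
    nlinarith [pow_pos hp.pos 2]
  calc Nat.card I = p ^ j := hcard
    _ ≤ p ^ 1 := Nat.pow_le_pow_right hp.pos (by omega)
    _ = p := pow_one p

theorem Ideal.le_card_quotient_of_card_eq_prime_sq (hp : p.Prime) (hA : Nat.card A = p ^ 2)
    {I : Ideal A} (hI : I ≠ ⊤) : p ≤ Nat.card (A ⧸ I) := by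
  have hlagrange := I.card_eq_card_quotient_mul_card
  have hI' := I.card_le_of_card_eq_prime_sq hp hA hI
  rw [hA] at hlagrange
  nlinarith [hp.pos]

theorem Ideal.inf_eq_bot_of_card_eq_prime_sq (hp : p.Prime) (hA : Nat.card A = p ^ 2)
    {m₁ m₂ : Ideal A} (hm₁ : m₁.IsMaximal) (hm₂ : m₂.IsMaximal) (hne : m₁ ≠ m₂) :
    m₁ ⊓ m₂ = ⊥ := by
  have hcop : IsCoprime m₁ m₂ := Ideal.isCoprime_iff_sup_eq.mpr (hm₁.coprime_of_ne hm₂ hne)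
  have hcrt : Nat.card (A ⧸ m₁ ⊓ m₂) = Nat.card (A ⧸ m₁) * Nat.card (A ⧸ m₂) := by
    rw [← Nat.card_prod, Nat.card_congr (Ideal.quotientInfEquivQuotientProd m₁ m₂ hcop).toEquiv]
  have hlagrange := (m₁ ⊓ m₂).card_eq_card_quotient_mul_card
  have h₁ := m₁.le_card_quotient_of_card_eq_prime_sq hp hA hm₁.ne_top
  have h₂ := m₂.le_card_quotient_of_card_eq_prime_sq hp hA hm₂.ne_top
  have : Finite A := Nat.finite_of_card_ne_zero (hA ▸ pow_ne_zero 2 hp.ne_zero)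
  have hle : Nat.card ↥(m₁ ⊓ m₂) ≤ 1 := by
    rw [hA, hcrt] at hlagrange
    nlinarith [Nat.mul_le_mul h₁ h₂, hp.pos]
  have := Finite.card_le_one_iff_subsingleton.mp hle
  exact Submodule.eq_bot_of_subsingleton

theorem exists_nonunits_subset_union_of_card_eq_prime_sq (hp : p.Prime)
    (hA : Nat.card A = p ^ 2) :
    ∃ m₁ m₂ : Ideal A, m₁ ≠ ⊤ ∧ m₂ ≠ ⊤ ∧ {a : A | ¬IsUnit a} ⊆ ↑m₁ ∪ ↑m₂ := by
  have : Finite A := Nat.finite_of_card_ne_zero (hA ▸ pow_ne_zero 2 hp.ne_zero)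
  have : Nontrivial A :=
    Finite.one_lt_card_iff_nontrivial.mp (hA ▸ Nat.one_lt_pow two_ne_zero hp.one_lt)
  obtain ⟨m₁, hm₁⟩ := Ideal.exists_maximal A
  by_cases h : ∃ m₂ : Ideal A, m₂.IsMaximal ∧ m₂ ≠ m₁
  · obtain ⟨m₂, hm₂, hne⟩ := h
    refine ⟨m₁, m₂, hm₁.ne_top, hm₂.ne_top, fun a ha => ?_⟩
    obtain ⟨m, hm, ham⟩ := exists_max_ideal_of_mem_nonunits ha
    have hbot := Ideal.inf_eq_bot_of_card_eq_prime_sq hp hA hm₁ hm₂ hne.symm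
    rcases (hm.isPrime.inf_le).mp (hbot ▸ bot_le) with h | h
    · exact Or.inl ((hm₁.eq_of_le hm.ne_top h) ▸ ham)
    · exact Or.inr ((hm₂.eq_of_le hm.ne_top h) ▸ ham)
  · push Not at h
    refine ⟨m₁, m₁, hm₁.ne_top, hm₁.ne_top, fun a ha => ?_⟩
    obtain ⟨m, hm, ham⟩ := exists_max_ideal_of_mem_nonunits ha
    exact Or.inl (h m hm ▸ ham)

theorem sub_one_sq_le_card_units_of_card_eq_prime_sq (hp : p.Prime) (hA : Nat.card A = p ^ 2) :
    (p - 1) ^ 2 ≤ Nat.card Aˣ := by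
  have : Finite A := Nat.finite_of_card_ne_zero (hA ▸ pow_ne_zero 2 hp.ne_zero)
  obtain ⟨m₁, m₂, hm₁, hm₂, hsub⟩ := exists_nonunits_subset_union_of_card_eq_prime_sq hp hA
  have hunion := Set.ncard_union_add_ncard_inter (m₁ : Set A) m₂
  have hinter : 1 ≤ ((m₁ : Set A) ∩ m₂).ncard :=
    (Set.ncard_pos (Set.toFinite _)).mpr ⟨0, m₁.zero_mem, m₂.zero_mem⟩
  have h₁ : (m₁ : Set A).ncard ≤ p := by
    rw [← Nat.card_coe_set_eq, SetLike.coe_sort_coe]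
    exact m₁.card_le_of_card_eq_prime_sq hp hA hm₁
  have h₂ : (m₂ : Set A).ncard ≤ p := by
    rw [← Nat.card_coe_set_eq, SetLike.coe_sort_coe]
    exact m₂.card_le_of_card_eq_prime_sq hp hA hm₂
  have hnonunits := Set.ncard_le_ncard hsub
  have hsplit := Set.ncard_add_ncard_compl {a : A | IsUnit a}
  have hunits : Nat.card Aˣ = {a : A | IsUnit a}.ncard := by
    rw [Nat.card_units_eq_card_setOf_isUnit, Nat.card_coe_set_eq]
  have hsq : (p - 1) ^ 2 + (2 * p - 1) = p ^ 2 := by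
    obtain ⟨q, rfl⟩ : ∃ q, p = q + 1 := ⟨p - 1, by have := hp.pos; omega⟩
    simp only [Nat.add_sub_cancel]
    rw [show 2 * (q + 1) - 1 = 2 * q + 1 by omega]
    ring
  simp only [Set.compl_ofPred] at hsplit
  omega

end CardPrimeSq

theorem Ideal.card_units_quotient_span_pow_mul {R : Type*} [CommRing R] (x : R) {k : ℕ}
    (hk : k ≠ 0) :
    Nat.card (R ⧸ Ideal.span {x ^ k})ˣ * Nat.card (R ⧸ Ideal.span {x}) =
      Nat.card (R ⧸ Ideal.span {x})ˣ * Nat.card (R ⧸ Ideal.span {x ^ k}) := by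
  have hle : Ideal.span {x ^ k} ≤ Ideal.span {x} :=
    Ideal.span_singleton_le_span_singleton.mpr (dvd_pow_self x hk)
  refine (Ideal.Quotient.factor hle).card_units_mul_card_eq_of_ker_isNilpotent
    (Ideal.Quotient.factor_surjective hle) fun a ha => ?_
  obtain ⟨r, rfl⟩ := Ideal.Quotient.mk_surjective a
  rw [RingHom.mem_ker, Ideal.Quotient.factor_mk, Ideal.Quotient.eq_zero_iff_mem,
    Ideal.mem_span_singleton] at ha
  refine ⟨k, ?_⟩
  rw [← map_pow, Ideal.Quotient.eq_zero_iff_mem, Ideal.mem_span_singleton]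
  exact pow_dvd_pow_of_dvd ha k

section CardQuotientNatCast

variable {R : Type*} [CommRing R]

theorem totient_prime_pow_sq_le_card_units_quotient
    (hR : ∀ n : ℕ, Nat.card (R ⧸ Ideal.span {(n : R)}) = n ^ 2) {p k : ℕ} (hp : p.Prime)
    (hk : k ≠ 0) :
    (p ^ k).totient ^ 2 ≤ Nat.card (R ⧸ Ideal.span {((p ^ k : ℕ) : R)})ˣ := by
  obtain ⟨j, rfl⟩ := Nat.exists_eq_add_one_of_ne_zero hk
  have key := Ideal.card_units_quotient_span_pow_mul (p : R) hk
  rw [← Nat.cast_pow, hR, hR] at key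
  refine le_of_mul_le_mul_right ?_ (pow_pos hp.pos 2)
  calc (p ^ (j + 1)).totient ^ 2 * p ^ 2 = (p - 1) ^ 2 * (p ^ (j + 1)) ^ 2 := by
        rw [Nat.totient_prime_pow_succ hp]; ring
    _ ≤ Nat.card (R ⧸ Ideal.span {(p : R)})ˣ * (p ^ (j + 1)) ^ 2 := by
        gcongr; exact sub_one_sq_le_card_units_of_card_eq_prime_sq hp (hR p)
    _ = _ := key.symm

theorem totient_sq_le_card_units_quotient_natCast
    (hR : ∀ n : ℕ, Nat.card (R ⧸ Ideal.span {(n : R)}) = n ^ 2) (n : ℕ) :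
    n.totient ^ 2 ≤ Nat.card (R ⧸ Ideal.span {(n : R)})ˣ := by
  induction n using Nat.recOnPosPrimePosCoprime with
  | zero => simp
  | one =>
    rw [Nat.cast_one, Ideal.span_singleton_one]
    have : Subsingleton (R ⧸ (⊤ : Ideal R)) := Ideal.Quotient.subsingleton_iff.mpr rfl
    simp
  | prime_pow p k hp hk => exact totient_prime_pow_sq_le_card_units_quotient hR hp hk.ne'
  | coprime a b _ _ hab iha ihb =>
    have hcop : IsCoprime (Ideal.span {(a : R)}) (Ideal.span {(b : R)}) := by
      rw [Ideal.isCoprime_span_singleton_iff]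
      exact hab.cast
    rw [Nat.totient_mul hab, mul_pow, Nat.cast_mul, ← Ideal.span_singleton_mul_span_singleton,
      Ideal.card_units_quotient_mul_of_isCoprime hcop]
    exact Nat.mul_le_mul iha ihb

end CardQuotientNatCast

theorem NumberField.card_quotient_span_natCast (K : Type*) [Field K] [NumberField K] (n : ℕ) :
    Nat.card (𝓞 K ⧸ Ideal.span {(n : 𝓞 K)}) = n ^ Module.finrank ℚ K := by
  rw [← RingOfIntegers.rank, ← Ideal.absNorm_span_natCast, Ideal.absNorm_apply,
    Submodule.cardQuot_apply]

section imagQuadField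

open Polynomial

variable {d : ℤ}

theorem imagQuadField_gen_sq (hd : d ≤ 0) : (Complex.I * Real.sqrt (-(d : ℝ)) : ℂ) ^ 2 = d := by
  have hsqrt : (Real.sqrt (-(d : ℝ)) : ℂ) ^ 2 = -(d : ℂ) := by
    rw [← Complex.ofReal_pow, Real.sq_sqrt (by simpa using hd)]
    push_cast; ring
  rw [mul_pow, Complex.I_sq, hsqrt, neg_one_mul, neg_neg]

theorem aeval_imagQuadField_gen (hd : d ≤ 0) :
    aeval (Complex.I * Real.sqrt (-(d : ℝ)) : ℂ) (X ^ 2 - C (d : ℚ)) = 0 := by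
  simp [imagQuadField_gen_sq hd]

theorem minpoly_imagQuadField_gen (hd0 : d < 0) :
    minpoly ℚ (Complex.I * Real.sqrt (-(d : ℝ)) : ℂ) = X ^ 2 - C (d : ℚ) := by
  have hirr : Irreducible (X ^ 2 - C (d : ℚ)) := by
    refine X_pow_sub_C_irreducible_of_prime Nat.prime_two fun b hb => ?_
    have : (d : ℚ) < 0 := by exact_mod_cast hd0
    nlinarith [sq_nonneg b]
  exact (minpoly.eq_of_irreducible_of_monic hirr (aeval_imagQuadField_gen hd0.le)
    (monic_X_pow_sub_C _ two_ne_zero)).symm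

theorem finrank_imagQuadField (hd0 : d < 0) : Module.finrank ℚ (imagQuadField d) = 2 := by
  have hint : IsIntegral ℚ (Complex.I * Real.sqrt (-(d : ℝ)) : ℂ) :=
    ⟨_, monic_X_pow_sub_C _ two_ne_zero, aeval_imagQuadField_gen hd0.le⟩
  rw [imagQuadField, adjoin.finrank hint, minpoly_imagQuadField_gen hd0, natDegree_X_pow_sub_C]

theorem numberField_imagQuadField (hd0 : d < 0) : NumberField (imagQuadField d) where
  to_finiteDimensional := Module.finite_of_finrank_eq_succ (finrank_imagQuadField hd0)

end imagQuadField

theorem card_units_quotient_ge_totient_sq_general (d : ℤ) (hd0 : d < 0)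
    (f : ℤ) (hf : 1 ≤ f) :
    Nat.totient f.toNat ^ 2 ≤
      Nat.card ((𝓞 ↥(imagQuadField d) ⧸
        Ideal.span {(f : 𝓞 ↥(imagQuadField d))})ˣ) := by
  have := numberField_imagQuadField hd0
  lift f to ℕ using by omega
  rw [Int.toNat_natCast, Int.cast_natCast]
  exact totient_sq_le_card_units_quotient_natCast
    (fun n => by rw [card_quotient_span_natCast, finrank_imagQuadField hd0]) f

/-- For `K = ℚ(√d)` imaginary quadratic (`d < 0` squarefree) and an integer `f ≥ 1`,
the unit group of `O_K/fO_K` has cardinality at least `φ(f)²`. -/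
theorem card_units_quotient_ge_totient_sq (d : ℤ) (hd : Squarefree d) (hd0 : d < 0)
    (f : ℤ) (hf : 1 ≤ f) :
    Nat.totient f.toNat ^ 2 ≤
      Nat.card ((𝓞 ↥(imagQuadField d) ⧸
        Ideal.span {(f : 𝓞 ↥(imagQuadField d))})ˣ) :=
  card_units_quotient_ge_totient_sq_general d hd0 f hf
end

section
/- Let p be a prime with p ≥ 5. Then the group SL₂(ℤ_p) of 2×2 matrices of determinant 1 over the p-adic integers is perfect: its commutator subgroup is the whole group. -/
/-!
Conjugating the transvection `!![1, b; 0, 1]` by `diag(u, u⁻¹)` multiplies `b` by `u²`, so its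
commutator with that diagonal matrix is the transvection with entry `b (u² - 1)`: when `u² - 1`
is a unit, every transvection is a commutator. Over a local ring `SL₂` is generated by
transvections: if the lower-left entry `c` of a matrix is not a unit then, as the determinant is
`1`, the upper-left entry `a` is, and adding the first row to the second makes `c` a unit; then
`!![a, b; c, d] = !![1, (a - 1)/c; 0, 1] * !![1, 0; c, 1] * !![1, (d - 1)/c; 0, 1]`.
In `ℤ_[p]` with `p ≥ 5` one takes `u = 2`.
-/

open scoped commutatorElement MatrixGroups

namespace Matrix.SpecialLinearGroup

variable {R : Type*} [CommRing R]

def diagUnits (u : Rˣ) : SL(2, R) :=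
  ⟨!![(u : R), 0; 0, ↑u⁻¹], by simp [det_fin_two_of]⟩

lemma coe_diagUnits (u : Rˣ) :
    (diagUnits u : Matrix (Fin 2) (Fin 2) R) = !![(u : R), 0; 0, ↑u⁻¹] :=
  rfl

lemma coe_transvection_zero_one (b : R) :
    (transvection zero_ne_one b : SL(2, R)) = !![1, b; 0, 1] := by
  ext i j
  fin_cases i <;> fin_cases j <;> simp [transvection_coe]

lemma coe_transvection_one_zero (b : R) :
    (transvection one_ne_zero b : SL(2, R)) = !![1, 0; b, 1] := by
  ext i j
  fin_cases i <;> fin_cases j <;> simp [transvection_coe]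

lemma diagUnits_inv (u : Rˣ) : (diagUnits u)⁻¹ = diagUnits u⁻¹ := by
  refine inv_eq_of_mul_eq_one_right <| Subtype.ext ?_
  simp [coe_diagUnits, coe_mul, one_fin_two]

lemma commutator_diagUnits_transvection_zero_one (u : Rˣ) (b : R) :
    ⁅diagUnits u, (transvection zero_ne_one b : SL(2, R))⁆ =
      transvection zero_ne_one (b * ((u : R) ^ 2 - 1)) := by
  rw [commutatorElement_def, diagUnits_inv, transvection_inv]
  refine Subtype.ext ?_
  simp [coe_diagUnits, coe_mul, coe_transvection_zero_one]
  ring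

lemma commutator_diagUnits_inv_transvection_one_zero (u : Rˣ) (b : R) :
    ⁅diagUnits u⁻¹, (transvection one_ne_zero b : SL(2, R))⁆ =
      transvection one_ne_zero (b * ((u : R) ^ 2 - 1)) := by
  rw [commutatorElement_def, diagUnits_inv, inv_inv, transvection_inv]
  refine Subtype.ext ?_
  simp [coe_diagUnits, coe_mul, coe_transvection_one_zero]
  ring

lemma eq_transvection_mul_transvection_mul_transvection (A : SL(2, R)) {c : Rˣ}
    (hc : A 1 0 = c) :
    A = transvection zero_ne_one ((A 0 0 - 1) * ↑c⁻¹) * transvection one_ne_zero (c : R) *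
      transvection zero_ne_one ((A 1 1 - 1) * ↑c⁻¹) := by
  have hdet : A 0 0 * A 1 1 - A 0 1 * A 1 0 = 1 := by rw [← det_fin_two]; exact A.det_coe
  have hcc : (c : R) * ↑c⁻¹ = 1 := c.mul_inv
  refine Subtype.ext <| Matrix.ext fun i j ↦ ?_
  fin_cases i <;> fin_cases j <;>
    simp [coe_mul, coe_transvection_zero_one, coe_transvection_one_zero, hc]
  · linear_combination (-((c⁻¹ : Rˣ) : R)) * hdet - (↑c⁻¹ * A 0 1) * hc - A 0 1 * hcc
  · linear_combination (1 - A 1 1) * hcc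

lemma exists_isUnit_transvection_mul_apply_one_zero [IsLocalRing R] (A : SL(2, R)) :
    ∃ b : R, IsUnit ((transvection one_ne_zero b * A : SL(2, R)) 1 0) := by
  by_cases hc : IsUnit (A 1 0)
  · exact ⟨0, by simpa using hc⟩
  refine ⟨1, ?_⟩
  have hdet : A 0 0 * A 1 1 + -(A 0 1 * A 1 0) = 1 := by
    rw [← sub_eq_add_neg, ← det_fin_two]; exact A.det_coe
  have ha : IsUnit (A 0 0) := by
    rcases IsLocalRing.isUnit_or_isUnit_of_isUnit_add (hdet ▸ isUnit_one) with h | h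
    · exact isUnit_of_mul_isUnit_left h
    · exact absurd (isUnit_of_mul_isUnit_right ((IsUnit.neg_iff _).1 h)) hc
  have hac : IsUnit (A 0 0 + A 1 0) := by
    have : IsUnit (A 0 0 + A 1 0 + -A 1 0) := by rwa [add_neg_cancel_right]
    exact (IsLocalRing.isUnit_or_isUnit_of_isUnit_add this).resolve_right
      fun h ↦ hc ((IsUnit.neg_iff _).1 h)
  simpa [coe_mul, coe_transvection_one_zero, mul_apply, Fin.sum_univ_two] using hac

lemma transvection_mem_commutator_of_isUnit {u : Rˣ} (hu : IsUnit ((u : R) ^ 2 - 1))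
    {i j : Fin 2} (hij : i ≠ j) (c : R) : transvection hij c ∈ commutator SL(2, R) := by
  have hc : c = c * ↑hu.unit⁻¹ * ((u : R) ^ 2 - 1) := by
    rw [mul_assoc, hu.val_inv_mul, mul_one]
  obtain ⟨rfl, rfl⟩ | ⟨rfl, rfl⟩ : i = 0 ∧ j = 1 ∨ i = 1 ∧ j = 0 := by omega
  · rw [hc, ← commutator_diagUnits_transvection_zero_one]
    exact Subgroup.commutator_mem_commutator (Subgroup.mem_top _) (Subgroup.mem_top _)
  · rw [hc, ← commutator_diagUnits_inv_transvection_one_zero]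
    exact Subgroup.commutator_mem_commutator (Subgroup.mem_top _) (Subgroup.mem_top _)

theorem transvection_induction_of_isLocalRing [IsLocalRing R] (P : SL(2, R) → Prop)
    (htransvec : ∀ (i j : Fin 2) (h : i ≠ j) c, P (transvection h c))
    (hmul : ∀ A B, P A → P B → P (A * B)) (A : SL(2, R)) : P A := by
  obtain ⟨b, hb⟩ := exists_isUnit_transvection_mul_apply_one_zero A
  have hA : A = transvection one_ne_zero (-b) * (transvection one_ne_zero b * A) := by
    rw [← mul_assoc, ← transvection_add, neg_add_cancel, transvection_coeff_zero, one_mul]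
  rw [hA, eq_transvection_mul_transvection_mul_transvection _ hb.unit_spec.symm]
  exact hmul _ _ (htransvec _ _ _ _)
    (hmul _ _ (hmul _ _ (htransvec _ _ _ _) (htransvec _ _ _ _)) (htransvec _ _ _ _))

theorem commutator_eq_top_of_isLocalRing [IsLocalRing R] {u : Rˣ}
    (hu : IsUnit ((u : R) ^ 2 - 1)) : commutator SL(2, R) = ⊤ :=
  eq_top_iff.2 fun A _ ↦ transvection_induction_of_isLocalRing _
    (fun _ _ ↦ transvection_mem_commutator_of_isUnit hu) (fun _ _ ↦ mul_mem) A

end Matrix.SpecialLinearGroup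

lemma PadicInt.isUnit_natCast_of_lt_of_ne_zero {p : ℕ} [Fact p.Prime] {n : ℕ} (hn : n < p)
    (h0 : n ≠ 0) : IsUnit (n : ℤ_[p]) :=
  isUnit_iff.2 <| norm_natCast_eq_one_iff.2 <| Nat.coprime_of_lt_prime h0 hn Fact.out

/-- For a prime `p ≥ 5`, the group `SL₂(ℤ_p)` is perfect: its commutator subgroup is
the whole group. -/
theorem SL2_padicInt_perfect (p : ℕ) [Fact p.Prime] (hp : 5 ≤ p) :
    commutator (Matrix.SpecialLinearGroup (Fin 2) ℤ_[p]) = ⊤ := by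
  have h2 : IsUnit (2 : ℤ_[p]) := by
    exact_mod_cast PadicInt.isUnit_natCast_of_lt_of_ne_zero (n := 2) (by omega) two_ne_zero
  have h3 : IsUnit ((2 : ℤ_[p]) ^ 2 - 1) := by
    rw [show (2 : ℤ_[p]) ^ 2 - 1 = ((3 : ℕ) : ℤ_[p]) by norm_num]
    exact PadicInt.isUnit_natCast_of_lt_of_ne_zero (by omega) three_ne_zero
  exact Matrix.SpecialLinearGroup.commutator_eq_top_of_isLocalRing (u := h2.unit) h3
end

section
/- Let M ⊆ ℂ be a finite Galois extension of ℚ containing an imaginary quadratic field K, and suppose the restriction c to M of complex conjugation acts on Gal(M/K) by inversion: c·g·c⁻¹ = g⁻¹ for all g ∈ Gal(M/K) (in particular Gal(M/K) is abelian). Then for every intermediate field M₀ with ℚ ⊆ M₀ ⊆ M such that M₀ is Galois over ℚ with abelian Galois group, and for every g ∈ Gal(M/K), the automorphism g² fixes M₀ pointwise; consequently [M₀ : M₀ ∩ K] ≤ the cardinality of the 2-torsion subgroup of Gal(M/K) times 2. -/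
/-!
Conjugation by `c` inverts every element of `Gal(M/K)`, so this group is abelian, and in the
abelian quotient `Gal(M₀/ℚ)` conjugation is trivial: the images of `g` and `g⁻¹` coincide, i.e.
`g²` acts trivially on `M₀`. By Galois theory `[M₀ : M₀ ∩ K]` is the order of the image of
`Gal(M/K)` in `Gal(M₀/ℚ)`. That image is a quotient of `Gal(M/K)` by a subgroup containing all
squares, so its order is at most `|Gal(M/K) / Gal(M/K)²| = |Gal(M/K)[2]|`.
-/

open IntermediateField

section GroupTheory

variable {G A : Type*} [Group G] [Group A]

theorem Subgroup.isMulCommutative_of_conj_eq_inv (H : Subgroup G) (c : G)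
    (hc : ∀ g ∈ H, c * g * c⁻¹ = g⁻¹) : IsMulCommutative H := by
  refine ⟨⟨fun a b => Subtype.ext (inv_injective ?_)⟩⟩
  calc ((a * b : H) : G)⁻¹ = c * (a * b) * c⁻¹ := (hc _ (a * b).2).symm
    _ = (c * a * c⁻¹) * (c * b * c⁻¹) := by group
    _ = ((b * a : H) : G)⁻¹ := by rw [hc a a.2, hc b b.2, Subgroup.coe_mul, mul_inv_rev]

theorem MonoidHom.map_sq_eq_one_of_conj_eq_inv [IsMulCommutative A] (f : G →* A) {c g : G}
    (h : c * g * c⁻¹ = g⁻¹) : f (g ^ 2) = 1 := by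
  calc f (g ^ 2) = f g * (f c * f g * (f c)⁻¹) := by
        rw [mul_comm' (f c), mul_inv_cancel_right, pow_two, map_mul]
    _ = 1 := by rw [← map_inv, ← map_mul, ← map_mul, h, map_inv, mul_inv_cancel]

theorem MonoidHom.card_range_le_card_ker_powMonoidHom {H : Type*} [CommGroup H] [Finite H]
    (f : H →* A) (n : ℕ) (hf : ∀ h, f (h ^ n) = 1) :
    Nat.card f.range ≤ Nat.card (powMonoidHom n : H →* H).ker := by
  rw [← Subgroup.index_ker, ← Subgroup.index_range]
  exact Subgroup.index_antitone (by rintro _ ⟨h, rfl⟩; exact hf h)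

open scoped IsMulCommutative in
theorem Subgroup.card_map_le_card_pow_eq_one (H : Subgroup G) [IsMulCommutative H] [Finite H]
    (f : G →* A) (n : ℕ) (hf : ∀ g ∈ H, f (g ^ n) = 1) :
    Nat.card (H.map f) ≤ Nat.card {g : G // g ∈ H ∧ g ^ n = 1} := by
  rw [← MonoidHom.domRestrict_range]
  refine ((f.domRestrict H).card_range_le_card_ker_powMonoidHom n fun h => hf h h.2).trans_eq ?_
  refine Nat.card_congr ((Equiv.subtypeEquivRight fun h => ?_).trans
    (Equiv.subtypeSubtypeEquivSubtypeInter (· ∈ H) (· ^ n = 1)))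
  rw [MonoidHom.mem_ker, powMonoidHom_apply, ← Subtype.val_inj, Subgroup.coe_pow,
    Subgroup.coe_one]

end GroupTheory

section GaloisTheory

variable {F E : Type*} [Field F] [Field E] [Algebra F E]

theorem AlgEquiv.restrictNormalHom_eq_one_iff (L : IntermediateField F E) [hL : Normal F L]
    {σ : E ≃ₐ[F] E} : AlgEquiv.restrictNormalHom L σ = 1 ↔ ∀ x ∈ L, σ x = x := by
  rw [← MonoidHom.mem_ker, L.restrictNormalHom_ker, IntermediateField.mem_fixingSubgroup_iff]

variable [FiniteDimensional F E] [IsGalois F E]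

theorem IntermediateField.fixedField_map_restrictNormalHom (K L : IntermediateField F E)
    [hL : Normal F L] :
    fixedField (K.fixingSubgroup.map (AlgEquiv.restrictNormalHom L)) = K.comap L.val := by
  ext x
  change _ ↔ (x : E) ∈ K
  conv_rhs => rw [← IsGalois.fixedField_fixingSubgroup K, mem_fixedField_iff]
  rw [mem_fixedField_iff]
  simp only [Subgroup.mem_map, forall_exists_index, and_imp, forall_apply_eq_imp_iff₂]
  refine forall₂_congr fun σ _ => ?_
  rw [← Subtype.val_inj, AlgEquiv.restrictNormalHom_apply]

theorem IntermediateField.relfinrank_eq_card_map_restrictNormalHom (K L : IntermediateField F E)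
    [hL : Normal F L] :
    relfinrank K L = Nat.card (K.fixingSubgroup.map (AlgEquiv.restrictNormalHom L)) := by
  rw [← finrank_fixedField_eq_card, fixedField_map_restrictNormalHom, finrank_comap,
    fieldRange_val]

end GaloisTheory

theorem anticyclotomic_abelian_subfield_bound_general
    (M : IntermediateField ℚ ℂ) [FiniteDimensional ℚ M] [IsGalois ℚ M]
    (K : IntermediateField ℚ M)
    (c : M ≃ₐ[ℚ] M)
    (hinv : ∀ g ∈ K.fixingSubgroup, c * g * c⁻¹ = g⁻¹)
    (M₀ : IntermediateField ℚ M) [IsGalois ℚ M₀]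
    (hab : ∀ σ τ : M₀ ≃ₐ[ℚ] M₀, σ * τ = τ * σ) :
    (∀ g ∈ K.fixingSubgroup, ∀ y ∈ M₀, (g ^ 2 : M ≃ₐ[ℚ] M) y = y) ∧
    Module.finrank ↥(M₀ ⊓ K)
        ↥(IntermediateField.extendScalars (inf_le_left : M₀ ⊓ K ≤ M₀)) ≤
      Nat.card {g : M ≃ₐ[ℚ] M // g ∈ K.fixingSubgroup ∧ g ^ 2 = 1} * 2 := by
  -- `[IsGalois ℚ M₀]` is stated for `DivisionRing.toRatAlgebra`, not for the algebra structure
  -- of the intermediate field `M₀`; the two agree only up to unfolding, so this normality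
  -- instance has to be passed by name.
  have hM₀ : Normal ℚ M₀ := IsGalois.to_normal
  have : IsMulCommutative (M₀ ≃ₐ[ℚ] M₀) := ⟨⟨hab⟩⟩
  have := K.fixingSubgroup.isMulCommutative_of_conj_eq_inv c hinv
  have hsq : ∀ g ∈ K.fixingSubgroup, AlgEquiv.restrictNormalHom M₀ (g ^ 2) = 1 :=
    fun g hg => MonoidHom.map_sq_eq_one_of_conj_eq_inv _ (hinv g hg)
  refine ⟨fun g hg => (AlgEquiv.restrictNormalHom_eq_one_iff M₀ (hL := hM₀)).1 (hsq g hg), ?_⟩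
  rw [← relfinrank_eq_finrank_of_le, inf_relfinrank_left,
    relfinrank_eq_card_map_restrictNormalHom (hL := hM₀)]
  exact (K.fixingSubgroup.card_map_le_card_pow_eq_one _ 2 hsq).trans
    (Nat.le_mul_of_pos_right _ two_pos)

/-- Let `M ⊆ ℂ` be a finite Galois extension of `ℚ` containing an imaginary quadratic field
`K = ℚ(√d)`, and suppose that complex conjugation restricts to an automorphism `c` of `M`
acting by inversion on `Gal(M/K)`.  Then for every intermediate field `M₀` of `M/ℚ` that is
abelian Galois over `ℚ`, and every `g ∈ Gal(M/K)`, the automorphism `g²` fixes `M₀`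
pointwise; consequently `[M₀ : M₀ ∩ K]` is at most twice the cardinality of the `2`-torsion
subgroup of `Gal(M/K)`. -/
theorem anticyclotomic_abelian_subfield_bound
    (M : IntermediateField ℚ ℂ) [FiniteDimensional ℚ M] [IsGalois ℚ M]
    (K : IntermediateField ℚ M)
    (hK : ∃ (d : ℤ) (x : M), Squarefree d ∧ d < 0 ∧ x ^ 2 = (d : M) ∧ K = ℚ⟮x⟯)
    (c : M ≃ₐ[ℚ] M)
    (hc : ∀ y : M, ((c y : M) : ℂ) = starRingEnd ℂ (y : ℂ))
    (hinv : ∀ g ∈ K.fixingSubgroup, c * g * c⁻¹ = g⁻¹)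
    (M₀ : IntermediateField ℚ M) [IsGalois ℚ M₀]
    (hab : ∀ σ τ : M₀ ≃ₐ[ℚ] M₀, σ * τ = τ * σ) :
    (∀ g ∈ K.fixingSubgroup, ∀ y ∈ M₀, (g ^ 2 : M ≃ₐ[ℚ] M) y = y) ∧
    Module.finrank ↥(M₀ ⊓ K)
        ↥(IntermediateField.extendScalars (inf_le_left : M₀ ⊓ K ≤ M₀)) ≤
      Nat.card {g : M ≃ₐ[ℚ] M // g ∈ K.fixingSubgroup ∧ g ^ 2 = 1} * 2 :=
  anticyclotomic_abelian_subfield_bound_general M K c hinv M₀ hab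
end
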